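/- κ_n ≥ ⌊n/2⌋ for all n ∈ ℕ, where κ_n is the maximum of κ(F,W) over all BANs F: B^n → B^n and block-sequential update schedules W. -/

import Mathlib

/-- A configuration of a Boolean automata network of size `n`. -/
abbrev Conf (n : ℕ) := Fin n → Bool

/-- `F_I`: update simultaneously exactly the automata in `I`. -/
def updSet {n : ℕ} (F : Conf n → Conf n) (I : Finset (Fin n)) (x : Conf n) : Conf n :=
  fun i => if i ∈ I then F x i else x i

/-- `W_{<j}`: union of the first `j` blocks of the schedule `W`. -/
def prefUnion {n : ℕ} (W : List (Finset (Fin n))) (j : ℕ) : Finset (Fin n) :=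
  (W.take j).foldr (· ∪ ·) ∅

/-- `W` is a block-sequential update schedule: an ordered partition of the automata. -/
def isSchedule {n : ℕ} (W : List (Finset (Fin n))) : Prop :=
  (∀ B ∈ W, B.Nonempty) ∧ W.Pairwise Disjoint ∧ W.foldr (· ∪ ·) ∅ = Finset.univ

/-- Confusable configurations: identical after updating the first `i` blocks, some `i ∈ [0,p]`. -/
def confusable {n : ℕ} (F : Conf n → Conf n) (W : List (Finset (Fin n))) (x x' : Conf n) : Prop :=
  ∃ i ≤ W.length, updSet F (prefUnion W i) x = updSet F (prefUnion W i) x'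

/-- `CC(x,x')`: the set of steps making `x` and `x'` confusable. -/
def CCset {n : ℕ} (F : Conf n → Conf n) (W : List (Finset (Fin n))) (x x' : Conf n) : Set ℕ :=
  {i | i ≤ W.length ∧ updSet F (prefUnion W i) x = updSet F (prefUnion W i) x'}

/-- The `G_NECC` graph: edges between non-equivalent confusable configurations. -/
def gnecc {n : ℕ} (F : Conf n → Conf n) (W : List (Finset (Fin n))) :
    SimpleGraph (Conf n) where
  Adj x x' := F x ≠ F x' ∧ confusable F W x x'
  symm := ⟨by
    rintro x x' ⟨hne, i, hi, h⟩
    exact ⟨hne.symm, i, hi, h.symm⟩⟩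
  loopless := ⟨by rintro x ⟨hne, _⟩; exact hne rfl⟩

/-- `F^W`: apply the blocks of `W` sequentially. -/
def runSched {n : ℕ} (F : Conf n → Conf n) (W : List (Finset (Fin n))) (x : Conf n) : Conf n :=
  W.foldl (fun y B => updSet F B y) x

/-- `W(i)`: the index of the block of `W` containing `i`. -/
def stepOf {n : ℕ} (W : List (Finset (Fin n))) (i : Fin n) : ℕ :=
  W.findIdx (fun B => decide (i ∈ B))

/-- `W' ∈ E_h(W,V')`: `W'` extends `W`, preserving the update order via `h`. -/
def extendsSched {n m : ℕ} (W : List (Finset (Fin n))) (W' : List (Finset (Fin m)))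
    (h : Fin n → Fin m) : Prop :=
  ∀ i i' : Fin n, (stepOf W i ≤ stepOf W i' ↔ stepOf W' (h i) ≤ stepOf W' (h i'))

/-- `(F',W')` `h`-simulates `(F,[V])`: `φ_h ∘ F'^{W'} = F ∘ φ_h`. -/
def simulates {n m : ℕ} (F' : Conf m → Conf m) (W' : List (Finset (Fin m)))
    (F : Conf n → Conf n) (h : Fin n → Fin m) : Prop :=
  ∀ z : Conf m, (fun i => runSched F' W' z (h i)) = F (fun i => z (h i))

/-- `κ(F,W)`: minimal number of additional automata needed to simulate `(F,[V])`
with a schedule extending `W` order-preservingly. -/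
noncomputable def kappa {n : ℕ} (F : Conf n → Conf n) (W : List (Finset (Fin n))) : ℕ :=
  sInf {k | ∃ h : Fin n → Fin (n + k), Function.Injective h ∧
    ∃ W' : List (Finset (Fin (n + k))), isSchedule W' ∧ extendsSched W W' h ∧
      ∃ F' : Conf (n + k) → Conf (n + k), simulates F' W' F h}

/-- The simple sequential update schedule `({0},{1},…,{n-1})`. -/
def seqSched (n : ℕ) : List (Finset (Fin n)) := (List.finRange n).map (fun i => {i})

/-!
Take `q = n / 2` and the network `shiftNet n q`, which copies automaton `j` into `q + j` and
resets the first `q` automata, with the sequential schedule. Put `y ∈ 𝔹^q` in the first `q`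
automata and run a simulation with `k` extra automata. If two inputs `y ≠ y'` ended with the same
states on the extra automata, cut both runs just after the automaton simulating `d`, the last
index where `y` and `y'` differ, is updated: the simulated automata updated so far are reset on
both sides and the others still hold equal states, so the runs are confused there and end equal.
Since `y ↦ shiftNet n q (padFalse n y)` is injective, this is impossible, hence `2^k ≥ 2^q`.
The supremum is finite because copying all `n` automata first always gives a simulation.
-/

section Runs

variable {α : Type*} {n : ℕ} {F : Conf n → Conf n}

lemma mem_foldr_union_iff [DecidableEq α] {L : List (Finset α)} {a : α} :
    a ∈ L.foldr (· ∪ ·) ∅ ↔ ∃ B ∈ L, a ∈ B := by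
  induction L with
  | nil => simp
  | cons B L ih => simp [ih]

lemma isSchedule.exists_mem {W : List (Finset (Fin n))} (hW : isSchedule W) (v : Fin n) :
    ∃ B ∈ W, v ∈ B :=
  mem_foldr_union_iff.mp (hW.2.2 ▸ Finset.mem_univ v)

@[simp] lemma runSched_cons (B : Finset (Fin n)) (L : List (Finset (Fin n))) (z : Conf n) :
    runSched F (B :: L) z = runSched F L (updSet F B z) := rfl

lemma runSched_append (L₁ L₂ : List (Finset (Fin n))) (z : Conf n) :
    runSched F (L₁ ++ L₂) z = runSched F L₂ (runSched F L₁ z) :=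
  List.foldl_append

lemma runSched_apply_of_forall_not_mem {L : List (Finset (Fin n))} {v : Fin n}
    (hv : ∀ B ∈ L, v ∉ B) (z : Conf n) : runSched F L z v = z v := by
  induction L generalizing z with
  | nil => rfl
  | cons B L ih =>
    rw [runSched_cons, ih (fun C hC => hv C (List.mem_cons_of_mem B hC)), updSet,
      if_neg (hv B List.mem_cons_self)]

lemma runSched_append_apply_of_forall_not_mem {L₁ L₂ : List (Finset (Fin n))} {v : Fin n}
    (hv : ∀ B ∈ L₂, v ∉ B) (z : Conf n) :
    runSched F (L₁ ++ L₂) z v = runSched F L₁ z v := by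
  rw [runSched_append, runSched_apply_of_forall_not_mem hv]

lemma runSched_apply_of_readsOnly {L : List (Finset (Fin n))} {P : Set (Fin n)}
    (hL : ∀ B ∈ L, ∀ v ∈ B, v ∉ P)
    (hF : ∀ x x' : Conf n, (∀ p ∈ P, x p = x' p) → ∀ v ∉ P, F x v = F x' v)
    (z : Conf n) (v : Fin n) :
    runSched F L z v = if v ∈ L.foldr (· ∪ ·) ∅ then F z v else z v := by
  induction L generalizing z with
  | nil => rfl
  | cons B L ih =>
    have hP : ∀ p ∈ P, updSet F B z p = z p := fun p hp => by
      rw [updSet, if_neg fun hpB => hL B List.mem_cons_self p hpB hp]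
    rw [runSched_cons, ih (fun C hC => hL C (List.mem_cons_of_mem B hC))]
    by_cases hvL : v ∈ L.foldr (· ∪ ·) ∅
    · obtain ⟨C, hC, hvC⟩ := mem_foldr_union_iff.mp hvL
      simp [hvL, hF _ _ hP v (hL C (List.mem_cons_of_mem B hC) v hvC)]
    · by_cases hvB : v ∈ B <;> simp [hvL, hvB, updSet]

end Runs

section Schedules

variable {n : ℕ} {W : List (Finset (Fin n))}

lemma stepOf_lt_length (hW : isSchedule W) (v : Fin n) : stepOf W v < W.length := by
  obtain ⟨B, hB, hvB⟩ := hW.exists_mem v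
  exact List.findIdx_lt_length.mpr ⟨B, hB, decide_eq_true hvB⟩

lemma mem_getElem_stepOf (hW : isSchedule W) (v : Fin n) :
    v ∈ W[stepOf W v]'(stepOf_lt_length hW v) :=
  of_decide_eq_true (List.findIdx_getElem (p := fun B => decide (v ∈ B)))

lemma not_mem_of_mem_take_stepOf {v : Fin n} {B : Finset (Fin n)}
    (hB : B ∈ W.take (stepOf W v)) : v ∉ B := by
  obtain ⟨j, hj, rfl⟩ := List.getElem_of_mem hB
  rw [List.length_take] at hj
  rw [List.getElem_take]
  simpa using List.not_of_lt_findIdx (p := fun B => decide (v ∈ B))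
    (lt_of_lt_of_le hj (min_le_left _ _))

lemma not_mem_of_mem_drop_stepOf (hW : isSchedule W) {v : Fin n} {B : Finset (Fin n)}
    (hB : B ∈ W.drop (stepOf W v + 1)) : v ∉ B := by
  have hdisj := (List.pairwise_append.mp
    ((List.take_append_drop (stepOf W v + 1) W).symm ▸ hW.2.1)).2.2
  have hvmem : W[stepOf W v]'(stepOf_lt_length hW v) ∈ W.take (stepOf W v + 1) := by
    rw [List.mem_iff_getElem]
    exact ⟨stepOf W v, by simp [stepOf_lt_length hW v], by simp⟩
  exact Finset.disjoint_left.mp (hdisj _ hvmem B hB) (mem_getElem_stepOf hW v)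

variable {F : Conf n → Conf n}

lemma runSched_take_apply_of_le {v : Fin n} {t : ℕ} (ht : t ≤ stepOf W v) (z : Conf n) :
    runSched F (W.take t) z v = z v :=
  runSched_apply_of_forall_not_mem
    (fun _ hB => not_mem_of_mem_take_stepOf (List.take_subset_take_left W ht hB)) z

lemma runSched_take_apply_of_lt (hW : isSchedule W) {v : Fin n} {t : ℕ} (ht : stepOf W v < t)
    (z : Conf n) : runSched F (W.take t) z v = runSched F W z v := by
  have hv : ∀ L ⊆ W.drop (stepOf W v + 1), ∀ B ∈ L, v ∉ B :=
    fun _ hL _ hB => not_mem_of_mem_drop_stepOf hW (hL hB)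
  obtain ⟨r, rfl⟩ := Nat.exists_eq_add_of_le ht
  conv_rhs => rw [← List.take_append_drop (stepOf W v + 1) W]
  rw [List.take_add (i := stepOf W v + 1),
    runSched_append_apply_of_forall_not_mem (hv _ (List.take_subset _ _)),
    runSched_append_apply_of_forall_not_mem (hv _ (List.Subset.refl _))]

lemma runSched_eq_of_agree_at_cut (hW : isSchedule W) (t : ℕ) {z z' : Conf n}
    (hupd : ∀ v, stepOf W v < t → runSched F W z v = runSched F W z' v)
    (hinit : ∀ v, t ≤ stepOf W v → z v = z' v) : runSched F W z = runSched F W z' := by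
  have hcut : runSched F (W.take t) z = runSched F (W.take t) z' := by
    funext v
    rcases lt_or_ge (stepOf W v) t with hv | hv
    · rw [runSched_take_apply_of_lt hW hv, runSched_take_apply_of_lt hW hv, hupd v hv]
    · rw [runSched_take_apply_of_le hv, runSched_take_apply_of_le hv, hinit v hv]
  have hsplit : ∀ z, runSched F W z = runSched F (W.drop t) (runSched F (W.take t) z) :=
    fun z => by rw [← runSched_append, List.take_append_drop]
  rw [hsplit z, hsplit z', hcut]

end Schedules

section Copy

variable {n : ℕ}

/-- The automaton `castAdd i` plays `i`; `natAdd i` first stores the initial state of `i`, from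
which `F` is then evaluated, so the original blocks can be updated one after the other. -/
def copyNet (F : Conf n → Conf n) : Conf (n + n) → Conf (n + n) :=
  fun z => Fin.append (F fun i => z (Fin.natAdd n i)) fun i => z (Fin.castAdd n i)

def copySched (W : List (Finset (Fin n))) : List (Finset (Fin (n + n))) :=
  Finset.univ.map (Fin.natAddEmb n) :: W.map (Finset.map (Fin.castAddEmb n))

lemma castAdd_ne_natAdd (i j : Fin n) : Fin.castAdd n i ≠ Fin.natAdd n j := by
  simp only [ne_eq, Fin.ext_iff, Fin.val_castAdd, Fin.val_natAdd]
  omega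

lemma isSchedule_copySched (hn : 0 < n) {W : List (Finset (Fin n))} (hW : isSchedule W) :
    isSchedule (copySched W) := by
  refine ⟨?_, ?_, ?_⟩
  · simp only [copySched, List.mem_cons, List.mem_map]
    rintro B (rfl | ⟨C, hC, rfl⟩)
    · exact Finset.univ_nonempty_iff.mpr ⟨⟨0, hn⟩⟩ |>.map
    · exact (hW.1 C hC).map
  · rw [copySched, List.pairwise_cons, List.pairwise_map]
    refine ⟨?_, hW.2.1.imp (Finset.disjoint_map _).mpr⟩
    simp only [List.mem_map]
    rintro _ ⟨C, -, rfl⟩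
    simp only [Finset.disjoint_left, Finset.mem_map, Finset.mem_univ, true_and]
    rintro _ ⟨j, rfl⟩ ⟨i, -, hij⟩
    exact castAdd_ne_natAdd i j hij
  · refine Finset.eq_univ_iff_forall.mpr fun v => mem_foldr_union_iff.mpr ?_
    induction v using Fin.addCases with
    | left i =>
      obtain ⟨B, hB, hiB⟩ := hW.exists_mem i
      exact ⟨B.map (Fin.castAddEmb n), List.mem_cons_of_mem _ (List.mem_map_of_mem hB),
        (Finset.mem_map' (Fin.castAddEmb n)).mpr hiB⟩
    | right j => exact ⟨_, List.mem_cons_self, Finset.mem_map_of_mem _ (Finset.mem_univ j)⟩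

lemma stepOf_copySched (W : List (Finset (Fin n))) (i : Fin n) :
    stepOf (copySched W) (Fin.castAdd n i) = stepOf W i + 1 := by
  have hcopy : Fin.castAdd n i ∉ Finset.univ.map (Fin.natAddEmb n) := by
    rw [Finset.mem_map]
    rintro ⟨j, -, hj⟩
    exact castAdd_ne_natAdd i j hj.symm
  simp only [stepOf, copySched, List.findIdx_cons, hcopy, decide_false, cond_false,
    List.findIdx_map]
  congr 2
  funext B
  simp

lemma extendsSched_copySched (W : List (Finset (Fin n))) :
    extendsSched W (copySched W) (Fin.castAdd n) := by
  intro i i'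
  rw [stepOf_copySched, stepOf_copySched, Nat.add_le_add_iff_right]

lemma simulates_copyNet {F : Conf n → Conf n} {W : List (Finset (Fin n))} (hW : isSchedule W) :
    simulates (copyNet F) (copySched W) F (Fin.castAdd n) := by
  intro z
  funext i
  have hcopies : ∀ j, updSet (copyNet F) (Finset.univ.map (Fin.natAddEmb n)) z (Fin.natAdd n j) =
      z (Fin.castAdd n j) := fun j => by
    have hj : Fin.natAdd n j ∈ Finset.univ.map (Fin.natAddEmb n) :=
      Finset.mem_map_of_mem (Fin.natAddEmb n) (Finset.mem_univ j)
    rw [updSet, if_pos hj]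
    exact Fin.append_right _ _ j
  have hreads : ∀ x x' : Conf (n + n), (∀ p ∈ Set.range (Fin.natAdd n), x p = x' p) →
      ∀ v ∉ Set.range (Fin.natAdd n), copyNet F x v = copyNet F x' v := by
    intro x x' hxx' v hv
    induction v using Fin.addCases with
    | left i =>
      simp only [copyNet, Fin.append_left]
      exact congrArg (F · i) (funext fun j => hxx' _ ⟨j, rfl⟩)
    | right j => exact absurd ⟨j, rfl⟩ hv
  have hblocks : ∀ B ∈ W.map (Finset.map (Fin.castAddEmb n)), ∀ v ∈ B,
      v ∉ Set.range (Fin.natAdd n) := by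
    simp only [List.mem_map]
    rintro _ ⟨C, -, rfl⟩ _ hv ⟨j, rfl⟩
    obtain ⟨i, -, hij⟩ := Finset.mem_map.mp hv
    exact castAdd_ne_natAdd i j hij
  have hcovered :
      Fin.castAdd n i ∈ (W.map (Finset.map (Fin.castAddEmb n))).foldr (· ∪ ·) ∅ := by
    obtain ⟨B, hB, hiB⟩ := hW.exists_mem i
    exact mem_foldr_union_iff.mpr
      ⟨_, List.mem_map_of_mem hB, (Finset.mem_map' (Fin.castAddEmb n)).mpr hiB⟩
  rw [copySched, runSched_cons, runSched_apply_of_readsOnly hblocks hreads, if_pos hcovered]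
  simp only [copyNet, Fin.append_left]
  exact congrArg (F · i) (funext hcopies)

end Copy

section Simulability

variable {n : ℕ}

def SimulableWith (F : Conf n → Conf n) (W : List (Finset (Fin n))) (k : ℕ) : Prop :=
  ∃ h : Fin n → Fin (n + k), Function.Injective h ∧
    ∃ W' : List (Finset (Fin (n + k))), isSchedule W' ∧ extendsSched W W' h ∧
      ∃ F' : Conf (n + k) → Conf (n + k), simulates F' W' F h

lemma kappa_eq_sInf (F : Conf n → Conf n) (W : List (Finset (Fin n))) :
    kappa F W = sInf {k | SimulableWith F W k} := rfl

lemma simulableWith_self (hn : 0 < n) (F : Conf n → Conf n) {W : List (Finset (Fin n))}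
    (hW : isSchedule W) : SimulableWith F W n :=
  ⟨_, Fin.castAdd_injective n n, _, isSchedule_copySched hn hW, extendsSched_copySched W,
    _, simulates_copyNet hW⟩

lemma kappa_le_self (hn : 0 < n) (F : Conf n → Conf n) {W : List (Finset (Fin n))}
    (hW : isSchedule W) : kappa F W ≤ n :=
  Nat.sInf_le (simulableWith_self hn F hW)

lemma simulates.apply_eq {m : ℕ} {F' : Conf m → Conf m} {W' : List (Finset (Fin m))}
    {F : Conf n → Conf n} {h : Fin n → Fin m} (hsim : simulates F' W' F h) {z : Conf m}
    {x : Conf n} (hz : ∀ j, z (h j) = x j) (j : Fin n) : runSched F' W' z (h j) = F x j := by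
  rw [← funext hz]
  exact congrFun (hsim z) j

end Simulability

section LowerBound

variable {n : ℕ}

lemma length_seqSched : (seqSched n).length = n := by simp [seqSched]

lemma isSchedule_seqSched (n : ℕ) : isSchedule (seqSched n) := by
  refine ⟨?_, ?_, ?_⟩
  · simp only [seqSched, List.mem_map]
    rintro _ ⟨i, -, rfl⟩
    exact Finset.singleton_nonempty i
  · rw [seqSched, List.pairwise_map]
    exact (List.nodup_finRange n).imp Finset.disjoint_singleton.mpr
  · refine Finset.eq_univ_iff_forall.mpr fun v => mem_foldr_union_iff.mpr ?_
    exact ⟨{v}, List.mem_map_of_mem (List.mem_finRange v), Finset.mem_singleton_self v⟩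

lemma stepOf_seqSched (v : Fin n) : stepOf (seqSched n) v = v := by
  unfold stepOf
  rw [List.findIdx_eq (by simp [length_seqSched])]
  constructor
  · simp [seqSched]
  · intro j hj
    simp [seqSched, Fin.ext_iff, hj.ne']

def shiftNet (n q : ℕ) : Conf n → Conf n :=
  fun x j => if h : q ≤ (j : ℕ) then x ⟨j - q, by omega⟩ else false

def padFalse {q : ℕ} (n : ℕ) (y : Conf q) : Conf n :=
  fun j => if h : (j : ℕ) < q then y ⟨j, h⟩ else false

lemma shiftNet_apply_of_lt {q : ℕ} (x : Conf n) {j : Fin n} (hj : (j : ℕ) < q) :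
    shiftNet n q x j = false := by
  rw [shiftNet, dif_neg (by omega)]

lemma shiftNet_padFalse_injective {q : ℕ} (hq : q + q ≤ n) :
    Function.Injective fun y : Conf q => shiftNet n q (padFalse n y) := by
  intro y y' hyy'
  funext t
  simpa [shiftNet, padFalse] using congrFun hyy' ⟨q + t, by omega⟩

variable {q k : ℕ} {h : Fin n → Fin (n + k)} {W' : List (Finset (Fin (n + k)))}
  {F' : Conf (n + k) → Conf (n + k)}

lemma eq_of_runSched_eq_off_range (hq : q + q ≤ n) (hW' : isSchedule W')
    (hext : extendsSched (seqSched n) W' h) (hsim : simulates F' W' (shiftNet n q) h)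
    {y y' : Conf q} {z z' : Conf (n + k)} (hz : ∀ j, z (h j) = padFalse n y j)
    (hz' : ∀ j, z' (h j) = padFalse n y' j) (hinit : ∀ v ∉ Set.range h, z v = z' v)
    (hfinal : ∀ v ∉ Set.range h, runSched F' W' z v = runSched F' W' z' v) : y = y' := by
  by_contra hne
  obtain ⟨d, -, hdmax⟩ := Finset.exists_max_image {t | y t ≠ y' t} (fun t : Fin q => t)
    (by simpa [Finset.filter_nonempty_iff, funext_iff] using hne)
  set d' : Fin n := ⟨d, by omega⟩
  have hstep : ∀ j : Fin n, stepOf W' (h j) ≤ stepOf W' (h d') ↔ (j : ℕ) ≤ d :=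
    fun j => by rw [← hext, stepOf_seqSched, stepOf_seqSched]
  have hruns : runSched F' W' z = runSched F' W' z' := by
    refine runSched_eq_of_agree_at_cut hW' (stepOf W' (h d') + 1)
      (fun v hv => ?_) (fun v hv => ?_)
    · by_cases hvh : v ∈ Set.range h
      · obtain ⟨j, rfl⟩ := hvh
        have hj : (j : ℕ) < q := ((hstep j).mp (Nat.lt_succ_iff.mp hv)).trans_lt d.isLt
        rw [hsim.apply_eq hz, hsim.apply_eq hz', shiftNet_apply_of_lt _ hj,
          shiftNet_apply_of_lt _ hj]
      · exact hfinal v hvh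
    · by_cases hvh : v ∈ Set.range h
      · obtain ⟨j, rfl⟩ := hvh
        have hj : d < (j : ℕ) := by
          by_contra! hj
          exact absurd ((hstep j).mpr hj) (by omega)
        rw [hz, hz', padFalse, padFalse]
        split_ifs with hjq
        · exact of_not_not fun hyj =>
            (hdmax ⟨j, hjq⟩ (by simpa using hyj)).not_gt (Fin.lt_def.mpr hj)
        · rfl
      · exact hinit v hvh
  refine hne (shiftNet_padFalse_injective hq (funext fun j => ?_))
  dsimp only
  rw [← hsim.apply_eq hz, ← hsim.apply_eq hz', hruns]

lemma le_of_simulates_shiftNet (hq : q + q ≤ n) (hinj : Function.Injective h)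
    (hW' : isSchedule W') (hext : extendsSched (seqSched n) W' h)
    (hsim : simulates F' W' (shiftNet n q) h) : q ≤ k := by
  by_contra! hk
  let z : Conf q → Conf (n + k) := fun y => Function.extend h (padFalse n y) fun _ => false
  let finalOffRange : Conf q → (↥(Set.range h)ᶜ → Bool) :=
    fun y v => runSched F' W' (z y) v
  have hcard : Fintype.card (↥(Set.range h)ᶜ → Bool) < Fintype.card (Conf q) := by
    simp only [Fintype.card_fun, Fintype.card_compl_set, Set.card_range_of_injective hinj,
      Fintype.card_fin, Fintype.card_bool, Nat.add_sub_cancel_left]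
    exact Nat.pow_lt_pow_right (by norm_num) hk
  obtain ⟨y, y', hne, hfinal⟩ := Fintype.exists_ne_map_eq_of_card_lt finalOffRange hcard
  refine hne (eq_of_runSched_eq_off_range hq hW' hext hsim (hinj.extend_apply _ _)
    (hinj.extend_apply _ _) (fun v hv => ?_) (fun v hv => congrFun hfinal ⟨v, hv⟩))
  simp only [Function.extend_apply' _ _ _ hv]

lemma le_kappa_shiftNet (hn : 0 < n) (hq : q + q ≤ n) :
    q ≤ kappa (shiftNet n q) (seqSched n) := by
  rw [kappa_eq_sInf]
  refine le_csInf ⟨n, simulableWith_self hn _ (isSchedule_seqSched n)⟩ ?_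
  rintro k ⟨h, hinj, W', hW', hext, F', hsim⟩
  exact le_of_simulates_shiftNet hq hinj hW' hext hsim

end LowerBound

theorem stmt5 (n : ℕ) :
    n / 2 ≤ sSup {k : ℕ | ∃ F : Conf n → Conf n, ∃ W : List (Finset (Fin n)),
      isSchedule W ∧ kappa F W = k} := by
  rcases Nat.eq_zero_or_pos n with rfl | hn
  · exact Nat.zero_le _
  have hbdd : BddAbove {k : ℕ | ∃ F : Conf n → Conf n, ∃ W : List (Finset (Fin n)),
      isSchedule W ∧ kappa F W = k} := by
    refine ⟨n, ?_⟩
    rintro _ ⟨F, W, hW, rfl⟩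
    exact kappa_le_self hn F hW
  exact (le_kappa_shiftNet hn (by omega)).trans
    (le_csSup hbdd ⟨_, _, isSchedule_seqSched n, rfl⟩)
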